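/- arXiv:1110.6645 — 6 statements merged into one kernel-verified Lean document; each statement's English description precedes it below -/
import Mathlib

section
/- The product of two spins is never a spin: if s₁ and s₂ are spins about rectangles R₁ and R₂ respectively (possibly equal), then s₁s₂ is not a spin about any rectangle. -/
/-- Positions on an `m × n` board, as (row, column) pairs. -/
abbrev Pos (m n : ℕ) := Fin m × Fin n

/-- An element `(α, u)` of the group `Spin_{m×n} = ℤ/2ℤ ≀ S_{mn}`: a permutation `α` of
the positions together with an orientation-flip vector `u ∈ (ℤ/2ℤ)^{mn}`. -/
@[ext] structure SpinElt (m n : ℕ) where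
  perm : Equiv.Perm (Pos m n)
  flip : Pos m n → ZMod 2

instance (m n : ℕ) : Group (SpinElt m n) where
  mul a b := ⟨a.perm * b.perm, fun p => a.flip p + b.flip (a.perm⁻¹ p)⟩
  one := ⟨1, 0⟩
  inv a := ⟨a.perm⁻¹, fun p => a.flip (a.perm p)⟩
  div a b := ⟨a.perm * b.perm⁻¹, fun p => a.flip p + b.flip (b.perm (a.perm⁻¹ p))⟩
  div_eq_mul_inv _ _ := rfl
  mul_assoc a b c := by
    refine SpinElt.ext (mul_assoc ..) (funext fun p => ?_)
    show a.flip p + b.flip (a.perm⁻¹ p) + c.flip ((a.perm * b.perm)⁻¹ p)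
        = a.flip p + (b.flip (a.perm⁻¹ p) + c.flip (b.perm⁻¹ (a.perm⁻¹ p)))
    simp [add_assoc]
  one_mul a := by
    refine SpinElt.ext (one_mul _) (funext fun p => ?_)
    show 0 + a.flip ((1 : Equiv.Perm (Pos m n))⁻¹ p) = a.flip p
    simp
  mul_one a := by
    refine SpinElt.ext (mul_one _) (funext fun p => ?_)
    show a.flip p + 0 = a.flip p
    simp
  inv_mul_cancel a := by
    refine SpinElt.ext (inv_mul_cancel _) (funext fun p => ?_)
    show a.flip (a.perm p) + a.flip ((a.perm⁻¹)⁻¹ p) = 0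
    simp [CharTwo.add_self_eq_zero]

@[simp] lemma SpinElt.mul_def {m n : ℕ} (a b : SpinElt m n) :
    a * b = ⟨a.perm * b.perm, fun p => a.flip p + b.flip (a.perm⁻¹ p)⟩ := rfl

@[simp] lemma SpinElt.one_def {m n : ℕ} : (1 : SpinElt m n) = ⟨1, 0⟩ := rfl

@[simp] lemma SpinElt.inv_def {m n : ℕ} (a : SpinElt m n) :
    a⁻¹ = ⟨a.perm⁻¹, fun p => a.flip (a.perm p)⟩ := rfl

/-- A rectangle on the `m × n` board, given by its top-left corner `(r1, c1)` and
bottom-right corner `(r2, c2)` (0-indexed). -/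
structure Rect (m n : ℕ) where
  r1 : ℕ
  c1 : ℕ
  r2 : ℕ
  c2 : ℕ
  hr : r1 ≤ r2
  hc : c1 ≤ c2
  hm : r2 < m
  hn : c2 < n

/-- Membership of a position in a rectangle. -/
def Rect.Mem {m n : ℕ} (R : Rect m n) (p : Pos m n) : Prop :=
  R.r1 ≤ p.1.val ∧ p.1.val ≤ R.r2 ∧ R.c1 ≤ p.2.val ∧ p.2.val ≤ R.c2

instance {m n : ℕ} (R : Rect m n) (p : Pos m n) : Decidable (R.Mem p) := by
  unfold Rect.Mem; infer_instance

/-- Rotation of the board by 180° about the center of `R`, fixing everything outside `R`. -/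
def Rect.rotFun {m n : ℕ} (R : Rect m n) (p : Pos m n) : Pos m n :=
  if h : R.Mem p then
    (⟨R.r1 + R.r2 - p.1.val, by obtain ⟨h1, h2, h3, h4⟩ := h; have := R.hm; omega⟩,
     ⟨R.c1 + R.c2 - p.2.val, by obtain ⟨h1, h2, h3, h4⟩ := h; have := R.hn; omega⟩)
  else p

lemma Rect.rotFun_fst {m n : ℕ} (R : Rect m n) (p : Pos m n) (h : R.Mem p) :
    ((R.rotFun p).1 : ℕ) = R.r1 + R.r2 - p.1.val := by
  simp only [Rect.rotFun, dif_pos h]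

lemma Rect.rotFun_snd {m n : ℕ} (R : Rect m n) (p : Pos m n) (h : R.Mem p) :
    ((R.rotFun p).2 : ℕ) = R.c1 + R.c2 - p.2.val := by
  simp only [Rect.rotFun, dif_pos h]

lemma Rect.rotFun_of_not_mem {m n : ℕ} (R : Rect m n) (p : Pos m n) (h : ¬ R.Mem p) :
    R.rotFun p = p := dif_neg h

lemma Rect.mem_rotFun {m n : ℕ} (R : Rect m n) (p : Pos m n) (h : R.Mem p) :
    R.Mem (R.rotFun p) := by
  obtain ⟨h1, h2, h3, h4⟩ := id h
  refine ⟨?_, ?_, ?_, ?_⟩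
  · rw [R.rotFun_fst p h]; omega
  · rw [R.rotFun_fst p h]; omega
  · rw [R.rotFun_snd p h]; omega
  · rw [R.rotFun_snd p h]; omega

lemma Rect.rotFun_involutive {m n : ℕ} (R : Rect m n) : Function.Involutive R.rotFun := by
  intro p
  by_cases h : R.Mem p
  · have h2 := R.mem_rotFun p h
    obtain ⟨h1', h2', h3', h4'⟩ := id h
    have e1 := R.rotFun_fst p h
    have e2 := R.rotFun_snd p h
    refine Prod.ext (Fin.ext ?_) (Fin.ext ?_)
    · rw [R.rotFun_fst _ h2, e1]; omega
    · rw [R.rotFun_snd _ h2, e2]; omega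
  · rw [R.rotFun_of_not_mem p h, R.rotFun_of_not_mem p h]

/-- The permutation of positions effected by the spin about `R`. -/
def Rect.spinPerm {m n : ℕ} (R : Rect m n) : Equiv.Perm (Pos m n) :=
  Function.Involutive.toPerm R.rotFun R.rotFun_involutive

/-- The spin about the rectangle `R`: it rotates the tiles in `R` by 180° and flips
the orientation of every tile in `R`. -/
def Rect.spin {m n : ℕ} (R : Rect m n) : SpinElt m n :=
  ⟨R.spinPerm, fun p => if R.Mem p then 1 else 0⟩

/-- An element of `Spin_{m×n}` is a spin if it is the spin about some rectangle. -/
def IsSpin {m n : ℕ} (x : SpinElt m n) : Prop := ∃ R : Rect m n, x = R.spin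

/-- The dimensions (number of rows, number of columns) of a rectangle. -/
def Rect.dims {m n : ℕ} (R : Rect m n) : ℕ × ℕ := (R.r2 + 1 - R.r1, R.c2 + 1 - R.c1)

/-!
If `s₁ s₂ = s₃` for spins `sᵢ` about `Rᵢ` with rotations `ρᵢ`, then, spins being involutions,
also `s₂ s₁ = s₃` and `s₃ s₂ = s₁`, so the roles of the three rectangles are interchangeable.
Comparing permutations gives `ρ₃ = ρ₁ ρ₂`; comparing flips, `R₃` is the symmetric difference of
`R₁` and `ρ₁ R₂`. On `R₁ \ R₂` the rotation `ρ₂` is trivial, so `ρ₃ = ρ₁` there and `R₁`, `R₃`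
are concentric. From this, no cell lies in all three rectangles; hence `ρ₃` fixes `R₁ ∩ R₂`,
where therefore `ρ₁ = ρ₂`, and `R₁`, `R₂` are concentric. So each rectangle is concentric with
one of the other two, all three are concentric, and their common centre cell lies in all three.
-/

lemma ZMod.ite_one_zero_add_ite_one_zero (A B : Prop) [Decidable A] [Decidable B] :
    ((if A then 1 else 0 : ZMod 2) + if B then 1 else 0) = if Xor A B then 1 else 0 := by
  by_cases hA : A <;> by_cases hB : B <;> simp [hA, hB, CharTwo.add_self_eq_zero]

lemma ZMod.ite_one_zero_inj (A B : Prop) [Decidable A] [Decidable B] :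
    (if A then (1 : ZMod 2) else 0) = (if B then 1 else 0) ↔ (A ↔ B) := by
  by_cases hA : A <;> by_cases hB : B <;> simp [hA, hB]

/-- Twice the centre of `R`: the rotation about `R` is `p ↦ R.doubleCenter - p` on `R`. -/
def Rect.doubleCenter {m n : ℕ} (R : Rect m n) : ℕ × ℕ := (R.r1 + R.r2, R.c1 + R.c2)

def Rect.centerCell {m n : ℕ} (R : Rect m n) : Pos m n :=
  (⟨(R.r1 + R.r2) / 2, by have := R.hr; have := R.hm; omega⟩,
   ⟨(R.c1 + R.c2) / 2, by have := R.hc; have := R.hn; omega⟩)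

namespace Rect

variable {m n : ℕ} {R₁ R₂ R₃ : Rect m n}

lemma mem_centerCell_of_doubleCenter_eq {R S : Rect m n} (h : R.doubleCenter = S.doubleCenter) :
    S.Mem R.centerCell := by
  simp only [doubleCenter, Prod.mk.injEq] at h
  have := S.hr; have := S.hc
  simp only [Mem, centerCell]
  omega

lemma mem_centerCell (R : Rect m n) : R.Mem R.centerCell :=
  mem_centerCell_of_doubleCenter_eq rfl

lemma rotFun_eq_rotFun_iff {R S : Rect m n} {p : Pos m n} (hR : R.Mem p) (hS : S.Mem p) :
    R.rotFun p = S.rotFun p ↔ R.doubleCenter = S.doubleCenter := by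
  obtain ⟨-, hR₁, -, hR₂⟩ := id hR
  obtain ⟨-, hS₁, -, hS₂⟩ := id hS
  simp only [Prod.ext_iff, Fin.ext_iff, rotFun_fst _ _ hR, rotFun_snd _ _ hR,
    rotFun_fst _ _ hS, rotFun_snd _ _ hS, doubleCenter]
  omega

lemma spin_mul_self (R : Rect m n) : R.spin * R.spin = 1 := by
  refine SpinElt.ext (Equiv.ext R.rotFun_involutive) (funext fun p => ?_)
  show (if R.Mem p then (1 : ZMod 2) else 0) + (if R.Mem (R.rotFun p) then 1 else 0) = 0
  by_cases h : R.Mem p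
  · rw [if_pos h, if_pos (R.mem_rotFun p h)]; decide
  · rw [if_neg h, R.rotFun_of_not_mem p h, if_neg h]; decide

lemma spin_mul_spin_swap (h : R₁.spin * R₂.spin = R₃.spin) : R₂.spin * R₁.spin = R₃.spin := by
  have hinv (R : Rect m n) : R.spin⁻¹ = R.spin := inv_eq_of_mul_eq_one_right R.spin_mul_self
  rw [← hinv R₁, ← hinv R₂, ← mul_inv_rev, h, hinv]

lemma spin_mul_spin_cancel (h : R₁.spin * R₂.spin = R₃.spin) : R₃.spin * R₂.spin = R₁.spin := by
  rw [← h, mul_assoc, spin_mul_self, mul_one]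

lemma rotFun_rotFun_of_spin_mul (h : R₁.spin * R₂.spin = R₃.spin) (p : Pos m n) :
    R₁.rotFun (R₂.rotFun p) = R₃.rotFun p :=
  congrArg (fun x => x.perm p) h

lemma mem_iff_xor_of_spin_mul (h : R₁.spin * R₂.spin = R₃.spin) (p : Pos m n) :
    R₃.Mem p ↔ Xor (R₁.Mem p) (R₂.Mem (R₁.rotFun p)) := by
  have hflip : (if R₁.Mem p then (1 : ZMod 2) else 0)
      + (if R₂.Mem (R₁.rotFun p) then 1 else 0) = if R₃.Mem p then 1 else 0 :=
    congrArg (fun x => x.flip p) h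
  rw [ZMod.ite_one_zero_add_ite_one_zero, ZMod.ite_one_zero_inj] at hflip
  exact hflip.symm

lemma mem_and_doubleCenter_eq_of_spin_mul (h : R₁.spin * R₂.spin = R₃.spin) {p : Pos m n}
    (h₁ : R₁.Mem p) (h₂ : ¬ R₂.Mem p) :
    R₃.Mem p ∧ R₁.doubleCenter = R₃.doubleCenter := by
  have hfix : R₂.rotFun p = p := R₂.rotFun_of_not_mem p h₂
  have h₃ : R₃.Mem p := by
    rw [mem_iff_xor_of_spin_mul (spin_mul_spin_swap h), hfix]
    exact Or.inr ⟨h₁, h₂⟩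
  refine ⟨h₃, (rotFun_eq_rotFun_iff h₁ h₃).1 ?_⟩
  rw [← rotFun_rotFun_of_spin_mul h, hfix]

lemma notMem_of_spin_mul (h : R₁.spin * R₂.spin = R₃.spin) {p : Pos m n}
    (h₁ : R₁.Mem p) (h₂ : R₂.Mem p) : ¬ R₃.Mem p := by
  intro h₃
  have hswap := spin_mul_spin_swap h
  have h₂' : ¬ R₂.Mem (R₁.rotFun p) := by
    simpa [Xor, h₁] using (mem_iff_xor_of_spin_mul h p).1 h₃
  have h₁' : ¬ R₁.Mem (R₂.rotFun p) := by
    simpa [Xor, h₂] using (mem_iff_xor_of_spin_mul hswap p).1 h₃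
  have e₁ := (mem_and_doubleCenter_eq_of_spin_mul h (R₁.mem_rotFun p h₁) h₂').2
  have e₂ := (mem_and_doubleCenter_eq_of_spin_mul hswap (R₂.mem_rotFun p h₂) h₁').2
  have hrot : R₁.rotFun p = R₂.rotFun p := (rotFun_eq_rotFun_iff h₁ h₂).2 (e₁.trans e₂.symm)
  exact h₂' (hrot ▸ R₂.mem_rotFun p h₂)

lemma doubleCenter_eq_or_of_spin_mul (h : R₁.spin * R₂.spin = R₃.spin) {p : Pos m n}
    (h₁ : R₁.Mem p) : R₁.doubleCenter = R₂.doubleCenter ∨ R₁.doubleCenter = R₃.doubleCenter := by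
  by_cases h₂ : R₂.Mem p
  · left
    have hfix : R₃.rotFun p = p := R₃.rotFun_of_not_mem p (notMem_of_spin_mul h h₁ h₂)
    refine (rotFun_eq_rotFun_iff h₁ h₂).1 ?_
    calc R₁.rotFun p = R₁.rotFun (R₁.rotFun (R₂.rotFun p)) := by
          rw [rotFun_rotFun_of_spin_mul h, hfix]
      _ = R₂.rotFun p := R₁.rotFun_involutive _
  · exact Or.inr (mem_and_doubleCenter_eq_of_spin_mul h h₁ h₂).2

end Rect

/-- The product of two spins (about possibly equal rectangles) is never a spin. -/
theorem stmt3 (m n : ℕ) (R₁ R₂ : Rect m n) : ¬ IsSpin (R₁.spin * R₂.spin) := by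
  rintro ⟨R₃, h⟩
  have h₁ := Rect.doubleCenter_eq_or_of_spin_mul h R₁.mem_centerCell
  have h₂ := Rect.doubleCenter_eq_or_of_spin_mul (Rect.spin_mul_spin_swap h) R₂.mem_centerCell
  have h₃ := Rect.doubleCenter_eq_or_of_spin_mul (Rect.spin_mul_spin_cancel h) R₃.mem_centerCell
  obtain ⟨e₂, e₃⟩ : R₁.doubleCenter = R₂.doubleCenter ∧ R₁.doubleCenter = R₃.doubleCenter := by
    grind
  exact Rect.notMem_of_spin_mul h R₁.mem_centerCell
    (Rect.mem_centerCell_of_doubleCenter_eq e₂) (Rect.mem_centerCell_of_doubleCenter_eq e₃)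
end

section
/- Two spins s₁ and s₂ about rectangles R₁ and R₂ commute (s₁s₂ = s₂s₁) if and only if R₁ and R₂ are disjoint or have a common center. -/
/-- Two rectangles are disjoint when they share no position. -/
def Rect.Disj {m n : ℕ} (R₁ R₂ : Rect m n) : Prop :=
  ∀ p : Pos m n, ¬ (R₁.Mem p ∧ R₂.Mem p)

/-- Two rectangles have a common center when their centers (centroids) coincide, i.e.
`(r1 + r2)/2` and `(c1 + c2)/2` agree. -/
def Rect.SameCenter {m n : ℕ} (R₁ R₂ : Rect m n) : Prop :=
  R₁.r1 + R₁.r2 = R₂.r1 + R₂.r2 ∧ R₁.c1 + R₁.c2 = R₂.c1 + R₂.c2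

/-! Commutation of `s₁ = (ρ₁, 1_{R₁})` and `s₂ = (ρ₂, 1_{R₂})` amounts to `ρ₁ρ₂ = ρ₂ρ₁` together
with the flip identity `1_{R₁} + 1_{R₂} ∘ ρ₁ = 1_{R₂} + 1_{R₁} ∘ ρ₂`. If the rectangles are disjoint or
concentric, each rotation preserves the other rectangle and the two rotations agree on `R₁ ∩ R₂`,
which gives both identities. Conversely, the flip identity forces `ρ₁` to map `R₁ ∩ R₂` into `R₂`,
hence onto itself; a reflection `x ↦ s - x` mapping a nonempty interval `[a, b]` onto itself has
`s = a + b`, so in each coordinate both rectangles have the center of `R₁ ∩ R₂`. -/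

namespace Rect

variable {m n : ℕ}

lemma spin_flip_apply (R : Rect m n) (p : Pos m n) :
    R.spin.flip p = if R.Mem p then 1 else 0 := rfl

lemma spin_mul_comm_iff (R₁ R₂ : Rect m n) :
    R₁.spin * R₂.spin = R₂.spin * R₁.spin ↔
      (∀ p, R₁.rotFun (R₂.rotFun p) = R₂.rotFun (R₁.rotFun p)) ∧
      ∀ p, R₁.spin.flip p + R₂.spin.flip (R₁.rotFun p)
        = R₂.spin.flip p + R₁.spin.flip (R₂.rotFun p) := by
  rw [SpinElt.mul_def, SpinElt.mul_def, SpinElt.mk.injEq, Equiv.ext_iff, funext_iff]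
  rfl

lemma mem_rotFun_iff_of_disj {R₁ R₂ : Rect m n} (hd : R₁.Disj R₂) (p : Pos m n) :
    R₂.Mem (R₁.rotFun p) ↔ R₂.Mem p := by
  by_cases h₁ : R₁.Mem p
  · exact iff_of_false (fun h => hd _ ⟨R₁.mem_rotFun p h₁, h⟩) (fun h => hd p ⟨h₁, h⟩)
  · rw [R₁.rotFun_of_not_mem p h₁]

lemma mem_rotFun_iff_of_sameCenter {R₁ R₂ : Rect m n} (hc : R₁.SameCenter R₂) (p : Pos m n) :
    R₂.Mem (R₁.rotFun p) ↔ R₂.Mem p := by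
  by_cases h₁ : R₁.Mem p
  · obtain ⟨_, _⟩ := hc
    have := R₁.rotFun_fst p h₁
    have := R₁.rotFun_snd p h₁
    obtain ⟨_, _, _, _⟩ := h₁
    unfold Mem
    omega
  · rw [R₁.rotFun_of_not_mem p h₁]

lemma rotFun_eq_of_sameCenter {R₁ R₂ : Rect m n} (hc : R₁.SameCenter R₂) {p : Pos m n}
    (h₁ : R₁.Mem p) (h₂ : R₂.Mem p) : R₁.rotFun p = R₂.rotFun p := by
  obtain ⟨hrow, hcol⟩ := hc
  ext
  · rw [R₁.rotFun_fst p h₁, R₂.rotFun_fst p h₂, hrow]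
  · rw [R₁.rotFun_snd p h₁, R₂.rotFun_snd p h₂, hcol]

lemma rotFun_comm_of_mem_rotFun_iff {R₁ R₂ : Rect m n}
    (h₁₂ : ∀ p, R₂.Mem (R₁.rotFun p) ↔ R₂.Mem p) (h₂₁ : ∀ p, R₁.Mem (R₂.rotFun p) ↔ R₁.Mem p)
    (heq : ∀ p, R₁.Mem p → R₂.Mem p → R₁.rotFun p = R₂.rotFun p) (p : Pos m n) :
    R₁.rotFun (R₂.rotFun p) = R₂.rotFun (R₁.rotFun p) := by
  by_cases h₁ : R₁.Mem p <;> by_cases h₂ : R₂.Mem p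
  · have h₁' : R₁.Mem (R₂.rotFun p) := (h₂₁ p).2 h₁
    have h₂' : R₂.Mem (R₁.rotFun p) := (h₁₂ p).2 h₂
    rw [heq _ h₁' (R₂.mem_rotFun p h₂), ← heq _ (R₁.mem_rotFun p h₁) h₂',
      R₁.rotFun_involutive, R₂.rotFun_involutive]
  · rw [R₂.rotFun_of_not_mem p h₂, R₂.rotFun_of_not_mem _ (mt (h₁₂ p).1 h₂)]
  · rw [R₁.rotFun_of_not_mem p h₁, R₁.rotFun_of_not_mem _ (mt (h₂₁ p).1 h₁)]
  · rw [R₁.rotFun_of_not_mem p h₁, R₂.rotFun_of_not_mem p h₂, R₁.rotFun_of_not_mem p h₁]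

lemma spin_mul_comm_of_mem_rotFun_iff {R₁ R₂ : Rect m n}
    (h₁₂ : ∀ p, R₂.Mem (R₁.rotFun p) ↔ R₂.Mem p) (h₂₁ : ∀ p, R₁.Mem (R₂.rotFun p) ↔ R₁.Mem p)
    (heq : ∀ p, R₁.Mem p → R₂.Mem p → R₁.rotFun p = R₂.rotFun p) :
    R₁.spin * R₂.spin = R₂.spin * R₁.spin := by
  refine (spin_mul_comm_iff R₁ R₂).2 ⟨rotFun_comm_of_mem_rotFun_iff h₁₂ h₂₁ heq, fun p => ?_⟩
  simp only [spin_flip_apply, if_congr (h₁₂ p) rfl rfl, if_congr (h₂₁ p) rfl rfl, add_comm]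

lemma mem_rotFun_of_flip_eq {R₁ R₂ : Rect m n}
    (hf : ∀ p, R₁.spin.flip p + R₂.spin.flip (R₁.rotFun p)
      = R₂.spin.flip p + R₁.spin.flip (R₂.rotFun p))
    {p : Pos m n} (h₁ : R₁.Mem p) (h₂ : R₂.Mem p) : R₂.Mem (R₁.rotFun p) := by
  by_contra hq
  -- `q = ρ₁ p` lies in `R₁ \ R₂` but `ρ₁ q = p` lies in `R₂`: the flip identity at `q` fails.
  have := hf (R₁.rotFun p)
  rw [R₁.rotFun_involutive p, R₂.rotFun_of_not_mem _ hq] at this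
  simp [spin_flip_apply, h₂, hq, R₁.mem_rotFun p h₁] at this

lemma add_eq_max_add_min_of_mem_rotFun {R₁ R₂ : Rect m n} {p₀ : Pos m n}
    (h₁ : R₁.Mem p₀) (h₂ : R₂.Mem p₀)
    (h : ∀ p, R₁.Mem p → R₂.Mem p → R₂.Mem (R₁.rotFun p)) :
    R₁.r1 + R₁.r2 = max R₁.r1 R₂.r1 + min R₁.r2 R₂.r2 ∧
      R₁.c1 + R₁.c2 = max R₁.c1 R₂.c1 + min R₁.c2 R₂.c2 := by
  obtain ⟨⟨x₀, _⟩, ⟨y₀, _⟩⟩ := p₀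
  dsimp only [Mem] at h₁ h₂
  have := R₁.hm
  have := R₁.hn
  have key : ∀ x y, max R₁.r1 R₂.r1 ≤ x → x ≤ min R₁.r2 R₂.r2 →
      max R₁.c1 R₂.c1 ≤ y → y ≤ min R₁.c2 R₂.c2 →
      R₂.r1 + x ≤ R₁.r1 + R₁.r2 ∧ R₁.r1 + R₁.r2 ≤ R₂.r2 + x ∧
      R₂.c1 + y ≤ R₁.c1 + R₁.c2 ∧ R₁.c1 + R₁.c2 ≤ R₂.c2 + y := by
    intro x y _ _ _ _
    let p : Pos m n := (⟨x, by omega⟩, ⟨y, by omega⟩)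
    have hx : (p.1 : ℕ) = x := rfl
    have hy : (p.2 : ℕ) = y := rfl
    have hp₁ : R₁.Mem p := by unfold Mem; omega
    have hp₂ : R₂.Mem p := by unfold Mem; omega
    have := R₁.rotFun_fst p hp₁
    have := R₁.rotFun_snd p hp₁
    obtain ⟨_, _, _, _⟩ := h p hp₁ hp₂
    omega
  -- Test at the four points where the lines through `p₀` leave `R₁ ∩ R₂`.
  have := key (max R₁.r1 R₂.r1) y₀ (by omega) (by omega) (by omega) (by omega)
  have := key (min R₁.r2 R₂.r2) y₀ (by omega) (by omega) (by omega) (by omega)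
  have := key x₀ (max R₁.c1 R₂.c1) (by omega) (by omega) (by omega) (by omega)
  have := key x₀ (min R₁.c2 R₂.c2) (by omega) (by omega) (by omega) (by omega)
  omega

end Rect

/-- Two spins commute if and only if their rectangles are disjoint or have a common
center. -/
theorem stmt4 (m n : ℕ) (R₁ R₂ : Rect m n) :
    R₁.spin * R₂.spin = R₂.spin * R₁.spin ↔ R₁.Disj R₂ ∨ R₁.SameCenter R₂ := by
  constructor
  · intro hcomm
    refine or_iff_not_imp_left.2 fun hd => ?_
    obtain ⟨p₀, h₁, h₂⟩ : ∃ p, R₁.Mem p ∧ R₂.Mem p := by simpa [Rect.Disj] using hd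
    have hf := ((Rect.spin_mul_comm_iff R₁ R₂).1 hcomm).2
    have c₁ := Rect.add_eq_max_add_min_of_mem_rotFun h₁ h₂ fun _ => Rect.mem_rotFun_of_flip_eq hf
    have c₂ := Rect.add_eq_max_add_min_of_mem_rotFun h₂ h₁ fun _ =>
      Rect.mem_rotFun_of_flip_eq fun q => (hf q).symm
    rw [max_comm R₂.r1, min_comm R₂.r2, max_comm R₂.c1, min_comm R₂.c2] at c₂
    exact ⟨c₁.1.trans c₂.1.symm, c₁.2.trans c₂.2.symm⟩
  · rintro (hd | hc)
    · exact Rect.spin_mul_comm_of_mem_rotFun_iff (Rect.mem_rotFun_iff_of_disj hd)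
        (Rect.mem_rotFun_iff_of_disj fun p h => hd p h.symm) fun p h₁ h₂ => absurd ⟨h₁, h₂⟩ (hd p)
    · exact Rect.spin_mul_comm_of_mem_rotFun_iff (Rect.mem_rotFun_iff_of_sameCenter hc)
        (Rect.mem_rotFun_iff_of_sameCenter ⟨hc.1.symm, hc.2.symm⟩)
        fun _ => Rect.rotFun_eq_of_sameCenter hc
end

section
/- The set of 1×1 spins together with the set of 1×2 and 2×1 spins generates the full group Spin_{m×n} = ℤ/2ℤ ≀ S_{mn}. -/
/-
The pure flips `(1, f)` are products of `1×1` spins, so an element `(σ, f)` of the group is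
generated as soon as the pure permutation `(σ, 0)` is. A domino spin is the transposition of its
two tiles composed with a pure flip, so every transposition of grid-adjacent tiles is generated.
The grid graph is connected, and transpositions along the edges of a connected graph generate
the whole symmetric group.
-/

open Equiv SimpleGraph

theorem SimpleGraph.Reachable.swap_mem {α : Type*} [DecidableEq α] {G : SimpleGraph α}
    {H : Subgroup (Perm α)} (hH : ∀ x y, G.Adj x y → swap x y ∈ H) {x y : α}
    (hxy : G.Reachable x y) : swap x y ∈ H := by
  rw [reachable_iff_reflTransGen] at hxy
  induction hxy with
  | refl => rw [swap_self]; exact H.one_mem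
  | tail _ hbc ih => exact SubmonoidClass.swap_mem_trans H ih (hH _ _ hbc)

theorem SimpleGraph.Preconnected.eq_top_of_swap_mem {α : Type*} [Finite α] [DecidableEq α]
    {G : SimpleGraph α} (hG : G.Preconnected) {H : Subgroup (Perm α)}
    (hH : ∀ x y, G.Adj x y → swap x y ∈ H) : H = ⊤ := by
  rw [eq_top_iff, ← Perm.closure_isSwap, Subgroup.closure_le]
  rintro _ ⟨x, y, -, rfl⟩
  exact Reachable.swap_mem hH (hG x y)

namespace SpinElt

variable {m n : ℕ}

def ofPerm : Perm (Pos m n) →* SpinElt m n where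
  toFun σ := ⟨σ, 0⟩
  map_one' := rfl
  map_mul' _ _ := SpinElt.ext rfl (funext fun _ => (add_zero 0).symm)

def ofFlip (f : Pos m n → ZMod 2) : SpinElt m n := ⟨1, f⟩

theorem ofFlip_zero : ofFlip (0 : Pos m n → ZMod 2) = 1 := rfl

theorem ofFlip_add (f g : Pos m n → ZMod 2) : ofFlip (f + g) = ofFlip f * ofFlip g :=
  SpinElt.ext (mul_one 1).symm (funext fun _ => by simp [ofFlip])

theorem ofPerm_mul_ofFlip (x : SpinElt m n) : ofPerm x.perm * ofFlip (x.flip ∘ x.perm) = x :=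
  SpinElt.ext (mul_one _) (by simp [ofPerm, ofFlip])

theorem ofFlip_mem_of_single_mem {H : Subgroup (SpinElt m n)}
    (hH : ∀ p, ofFlip (Pi.single p 1) ∈ H) (f : Pos m n → ZMod 2) : ofFlip f ∈ H := by
  induction f using Pi.single_induction with
  | zero => exact ofFlip_zero ▸ H.one_mem
  | add f g hf hg => exact ofFlip_add f g ▸ H.mul_mem hf hg
  | single p c =>
    rcases (by decide : ∀ c : ZMod 2, c = 0 ∨ c = 1) c with rfl | rfl
    · simpa only [Pi.single_zero, ofFlip_zero] using H.one_mem
    · exact hH p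

theorem mem_iff_ofPerm_mem {H : Subgroup (SpinElt m n)} (hH : ∀ f, ofFlip f ∈ H)
    (x : SpinElt m n) : x ∈ H ↔ ofPerm x.perm ∈ H := by
  conv_lhs => rw [← ofPerm_mul_ofFlip x]
  exact H.mul_mem_cancel_right (hH _)

end SpinElt

abbrev gridGraph (m n : ℕ) : SimpleGraph (Pos m n) := pathGraph m □ pathGraph n

namespace Rect

variable {m n : ℕ}

def span (p q : Pos m n) : Rect m n :=
  ⟨min p.1 q.1, min p.2 q.2, max p.1 q.1, max p.2 q.2, min_le_max, min_le_max,
    max_lt p.1.isLt q.1.isLt, max_lt p.2.isLt q.2.isLt⟩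

theorem mem_span_left (p q : Pos m n) : (span p q).Mem p := by
  simp only [span, Rect.Mem]
  omega

theorem rotFun_span_left (p q : Pos m n) : (span p q).rotFun p = q := by
  have hp := mem_span_left p q
  refine Prod.ext (Fin.ext ?_) (Fin.ext ?_)
  · rw [rotFun_fst _ _ hp]; simp only [span]; omega
  · rw [rotFun_snd _ _ hp]; simp only [span]; omega

theorem rotFun_span_right (p q : Pos m n) : (span p q).rotFun q = p := by
  simpa only [rotFun_span_left] using rotFun_involutive (span p q) p

theorem spinPerm_span {p q : Pos m n} (h : ∀ x, (span p q).Mem x ↔ x = p ∨ x = q) :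
    (span p q).spinPerm = swap p q := by
  ext x : 1
  change (span p q).rotFun x = swap p q x
  by_cases hx : (span p q).Mem x
  · obtain rfl | rfl := (h x).1 hx
    · rw [rotFun_span_left, swap_apply_left]
    · rw [rotFun_span_right, swap_apply_right]
  · rw [rotFun_of_not_mem _ _ hx, swap_apply_of_ne_of_ne (fun e => hx ((h x).2 (.inl e)))
      (fun e => hx ((h x).2 (.inr e)))]

theorem mem_span_self_iff (p x : Pos m n) : (span p p).Mem x ↔ x = p := by
  simp only [span, Rect.Mem, Prod.ext_iff, Fin.ext_iff]
  omega

theorem spin_span_self (p : Pos m n) : (span p p).spin = SpinElt.ofFlip (Pi.single p 1) := by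
  have hmem (x : Pos m n) : (span p p).Mem x ↔ x = p ∨ x = p := by
    rw [or_self, mem_span_self_iff]
  refine SpinElt.ext ?_ (funext fun x => ?_)
  · exact (spinPerm_span hmem).trans (swap_self p)
  · simp [spin, SpinElt.ofFlip, mem_span_self_iff, Pi.single_apply]

theorem dims_span_self (p : Pos m n) : (span p p).dims = (1, 1) := by
  simp only [dims, span, min_self, max_self, Prod.mk.injEq]
  omega

theorem mem_span_iff_of_adj {p q : Pos m n} (hpq : (gridGraph m n).Adj p q) (x : Pos m n) :
    (span p q).Mem x ↔ x = p ∨ x = q := by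
  simp only [boxProd_adj, pathGraph_adj, Prod.ext_iff, Fin.ext_iff] at hpq ⊢
  simp only [span, Rect.Mem]
  omega

theorem dims_span_of_adj {p q : Pos m n} (hpq : (gridGraph m n).Adj p q) :
    (span p q).dims = (1, 2) ∨ (span p q).dims = (2, 1) := by
  simp only [boxProd_adj, pathGraph_adj, Fin.ext_iff] at hpq
  simp only [dims, span, Prod.mk.injEq]
  omega

end Rect

theorem SpinElt.eq_top_of_spin_span_mem {m n : ℕ} {H : Subgroup (SpinElt m n)}
    (hsingle : ∀ p, (Rect.span p p).spin ∈ H)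
    (hdomino : ∀ p q, (gridGraph m n).Adj p q → (Rect.span p q).spin ∈ H) : H = ⊤ := by
  have hflip : ∀ f, ofFlip f ∈ H :=
    ofFlip_mem_of_single_mem fun p => Rect.spin_span_self p ▸ hsingle p
  have hperm : H.comap ofPerm = ⊤ := by
    refine ((pathGraph_preconnected m).boxProd (pathGraph_preconnected n)).eq_top_of_swap_mem
      fun p q hpq => ?_
    rw [Subgroup.mem_comap, ← Rect.spinPerm_span (Rect.mem_span_iff_of_adj hpq)]
    exact (mem_iff_ofPerm_mem hflip _).1 (hdomino p q hpq)
  exact eq_top_iff.2 fun x _ => (mem_iff_ofPerm_mem hflip x).2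
    (Subgroup.mem_comap.1 (hperm ▸ Subgroup.mem_top x.perm))

/-- The `1×1` spins together with the `1×2` and `2×1` spins generate all of
`Spin_{m×n}`. -/
theorem stmt10 (m n : ℕ) :
    Subgroup.closure {s : SpinElt m n | ∃ R : Rect m n, s = R.spin ∧
      (R.dims = (1, 1) ∨ R.dims = (1, 2) ∨ R.dims = (2, 1))} = ⊤ :=
  SpinElt.eq_top_of_spin_span_mem
    (fun p => Subgroup.subset_closure ⟨_, rfl, .inl (Rect.dims_span_self p)⟩)
    (fun _ _ hpq => Subgroup.subset_closure ⟨_, rfl, .inr (Rect.dims_span_of_adj hpq)⟩)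
end

section
/- Every element of Spin_{m×n} can be expressed as a product of at most 3mn − (m+n) spins. -/
/-!
`Spin_{m×n}` acts on tiles, i.e. pairs (position, orientation). Solve the cells one at a time,
column by column from the left and each column from the bottom up. Once all cells before `q` hold
their own tiles unflipped, the tile that belongs at `q` lies at a cell `p` not before `q`, and it
is brought to `q` by spins avoiding the solved cells: one spin about the rectangle with corners
`q` and `p`, or two spins turning the corner at row `q.1`, column `p.2`, and then possibly a
`1 × 1` spin at `p` to correct the orientation. This is three spins per cell, two in the bottom
row and in the last column, and one for the last cell: `(n - 1)(3m - 1) + (2m - 1) = 3mn - (m + n)`.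
-/

namespace Finset

variable {ι : Type*} [LinearOrder ι] {b : ι} {s : Finset ι}

lemma compl_coe_insert_eq_Iio (hbs : ∀ i ∈ s, b < i) (hup : IsUpperSet (↑(insert b s) : Set ι)) :
    (↑(insert b s) : Set ι)ᶜ = Set.Iio b := by
  ext i
  simp only [Set.mem_compl_iff, Set.mem_Iio]
  refine ⟨fun hi => lt_of_not_ge fun hbi => hi (hup hbi (by simp)), fun hi hmem => ?_⟩
  rcases mem_insert.1 hmem with rfl | hi'
  exacts [hi.false, (hi.trans (hbs i hi')).false]

lemma isUpperSet_of_isUpperSet_insert (hbs : ∀ i ∈ s, b < i)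
    (hup : IsUpperSet (↑(insert b s) : Set ι)) : IsUpperSet (s : Set ι) := by
  have : (s : Set ι) = ↑(insert b s) ∩ Set.Ioi b := by
    ext i
    simp only [coe_insert, Set.mem_inter_iff, Set.mem_insert_iff, mem_coe, Set.mem_Ioi]
    exact ⟨fun hi => ⟨.inr hi, hbs i hi⟩, fun ⟨hi, hbi⟩ => hi.resolve_left hbi.ne'⟩
  rw [this]
  exact hup.inter (isUpperSet_Ioi b)

end Finset

open Finset in
theorem exists_list_prod_eq_of_forall_exists_smul_eq {G α ι : Type*} [Group G] [MulAction G α]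
    [LinearOrder ι] [Fintype ι] (P : G → Prop) (a : ι → α) (c : ι → ℕ)
    (heq_one : ∀ x : G, (∀ i, x • a i = a i) → x = 1)
    (hstep : ∀ i, ∀ x ∈ fixingSubgroup G (a '' Set.Iio i), ∃ l : List G,
      (∀ g ∈ l, P g ∧ g ∈ fixingSubgroup G (a '' Set.Iio i)) ∧ l.length ≤ c i ∧
        l.prod • a i = x • a i)
    (x : G) : ∃ l : List G, (∀ g ∈ l, P g) ∧ l.length ≤ ∑ i, c i ∧ l.prod = x := by
  classical
  suffices key : ∀ s : Finset ι, IsUpperSet (s : Set ι) →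
      ∀ x ∈ fixingSubgroup G (a '' (↑s)ᶜ), ∃ l : List G, (∀ g ∈ l, P g) ∧
        l.length ≤ ∑ i ∈ s, c i ∧ l.prod = x by
    exact key univ (by simpa using isUpperSet_univ) x (by simp)
  intro s
  induction s using Finset.induction_on_min with
  | empty =>
    intro _ x hx
    refine ⟨[], by simp, by simp, (heq_one x fun i => ?_).symm⟩
    exact (mem_fixingSubgroup_iff G).1 hx _ ⟨i, by simp, rfl⟩
  | insert b s hbs ih =>
    intro hup x hx
    have hcompl := compl_coe_insert_eq_Iio hbs hup
    rw [hcompl] at hx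
    obtain ⟨l, hlP, hlen, hsmul⟩ := hstep b x hx
    -- the indices outside `s` are `b` and those below it
    have hrest : l.prod⁻¹ * x ∈ fixingSubgroup G (a '' (↑s)ᶜ) := by
      have hlprod : l.prod ∈ fixingSubgroup G (a '' Set.Iio b) :=
        Subgroup.list_prod_mem _ fun g hg => (hlP g hg).2
      have hfix := (mem_fixingSubgroup_iff G).1 (mul_mem (inv_mem hlprod) hx)
      rw [mem_fixingSubgroup_iff]
      rintro _ ⟨i, hi, rfl⟩
      by_cases hib : i = b
      · rw [hib, mul_smul, ← hsmul, inv_smul_smul]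
      · refine hfix _ ⟨i, ?_, rfl⟩
        rw [← hcompl]
        simpa [hib] using hi
    obtain ⟨l', hl'P, hlen', hprod'⟩ := ih (isUpperSet_of_isUpperSet_insert hbs hup) _ hrest
    refine ⟨l ++ l', ?_, ?_, by rw [List.prod_append, hprod', mul_inv_cancel_left]⟩
    · simp only [List.mem_append]
      rintro g (hg | hg)
      exacts [(hlP g hg).1, hl'P g hg]
    · rw [List.length_append, sum_insert fun h => (hbs b h).false]
      omega

namespace SpinElt

variable {m n : ℕ}

/-- `g` carries a tile lying at `p` with orientation `v` to `g.perm p`, where it is flipped by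
`g.flip (g.perm p)`. -/
instance : MulAction (SpinElt m n) (Pos m n × ZMod 2) where
  smul g t := (g.perm t.1, t.2 + g.flip (g.perm t.1))
  one_smul t := Prod.ext rfl (add_zero t.2)
  mul_smul a b t := Prod.ext rfl <| by
    change t.2 + (a.flip (a.perm (b.perm t.1)) + b.flip (a.perm⁻¹ (a.perm (b.perm t.1))))
      = t.2 + b.flip (b.perm t.1) + a.flip (a.perm (b.perm t.1))
    rw [Equiv.Perm.inv_def, Equiv.symm_apply_apply]
    ring

lemma smul_def (g : SpinElt m n) (t : Pos m n × ZMod 2) :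
    g • t = (g.perm t.1, t.2 + g.flip (g.perm t.1)) := rfl

lemma eq_one_of_forall_smul_eq (g : SpinElt m n)
    (h : ∀ p : Pos m n, g • (p, (0 : ZMod 2)) = (p, 0)) : g = 1 := by
  have hperm : ∀ p, g.perm p = p := fun p => congrArg Prod.fst (h p)
  refine SpinElt.ext (Equiv.ext hperm) (funext fun p => ?_)
  simpa [smul_def, hperm] using congrArg Prod.snd (h p)

end SpinElt

namespace Pos

variable {m n : ℕ}

/-- The order in which the cells get solved: column by column from the left, each column from
the bottom row up. -/
def sweep : Pos m n ≃ Fin n ×ₗ (Fin m)ᵒᵈ :=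
  ((Equiv.prodComm _ _).trans ((Equiv.refl _).prodCongr OrderDual.toDual)).trans toLex

lemma sweep_le_sweep_iff {q w : Pos m n} :
    sweep q ≤ sweep w ↔ (q.2 : ℕ) < w.2 ∨ (q.2 : ℕ) = w.2 ∧ (w.1 : ℕ) ≤ q.1 := by
  simp [sweep, Prod.Lex.toLex_le_toLex, Fin.ext_iff]

/-- The number of spins needed to solve cell `q` once all cells before it are solved: three in
general, two when the tile never has to turn a corner (bottom row, last column), and one for the
last cell, whose tile is then already in place. -/
def solveCost (q : Pos m n) : ℕ :=
  if (q.2 : ℕ) + 1 = n then (if (q.1 : ℕ) = 0 then 1 else 2)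
  else if (q.1 : ℕ) + 1 = m then 2 else 3

lemma sum_solveCost (m n : ℕ) : ∑ q : Pos m n, solveCost q = 3 * m * n - (m + n) := by
  rcases m with _ | m
  · simp
  rcases n with _ | n
  · simp
  have hcol : ∀ j : Fin n, ∑ i : Fin (m + 1), solveCost (i, j.castSucc) = m * 3 + 2 := by
    intro j
    simp [Fin.sum_univ_castSucc, solveCost, j.isLt.ne, fun i : Fin m => i.isLt.ne]
  have hlast : ∑ i : Fin (m + 1), solveCost (i, Fin.last n) = 1 + m * 2 := by
    simp [Fin.sum_univ_succ, solveCost]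
  rw [Fintype.sum_prod_type_right, Fin.sum_univ_castSucc]
  simp only [hcol, hlast, Finset.sum_const, Finset.card_univ, Fintype.card_fin, smul_eq_mul]
  have : 3 * (m + 1) * (n + 1) = n * (m * 3 + 2) + (1 + m * 2) + (m + 1 + (n + 1)) := by ring
  omega

end Pos

namespace Rect

variable {m n : ℕ}

open Pos

lemma spin_smul_of_mem (R : Rect m n) {p : Pos m n} (h : R.Mem p) (v : ZMod 2) :
    R.spin • (p, v) = (R.rotFun p, v + 1) := by
  simp [SpinElt.smul_def, Rect.spin, Rect.spinPerm, R.mem_rotFun p h]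

lemma spin_smul_of_not_mem (R : Rect m n) {p : Pos m n} (h : ¬ R.Mem p) (v : ZMod 2) :
    R.spin • (p, v) = (p, v) := by
  simp [SpinElt.smul_def, Rect.spin, Rect.spinPerm, R.rotFun_of_not_mem p h, h]

lemma spin_mem_fixingSubgroup (R : Rect m n) {S : Set (Pos m n × ZMod 2)}
    (h : ∀ t ∈ S, ¬ R.Mem t.1) : R.spin ∈ fixingSubgroup (SpinElt m n) S :=
  (mem_fixingSubgroup_iff _).2 fun t ht => R.spin_smul_of_not_mem (h t ht) t.2

def ofCorners (a b : Pos m n) : Rect m n where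
  r1 := min (a.1 : ℕ) b.1
  c1 := min (a.2 : ℕ) b.2
  r2 := max (a.1 : ℕ) b.1
  c2 := max (a.2 : ℕ) b.2
  hr := min_le_max
  hc := min_le_max
  hm := max_lt a.1.isLt b.1.isLt
  hn := max_lt a.2.isLt b.2.isLt

lemma mem_ofCorners_iff {a b w : Pos m n} :
    (ofCorners a b).Mem w ↔ min (a.1 : ℕ) b.1 ≤ w.1 ∧ (w.1 : ℕ) ≤ max (a.1 : ℕ) b.1 ∧
      min (a.2 : ℕ) b.2 ≤ w.2 ∧ (w.2 : ℕ) ≤ max (a.2 : ℕ) b.2 := Iff.rfl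

lemma spin_ofCorners_smul (a b : Pos m n) (v : ZMod 2) :
    (ofCorners a b).spin • (a, v) = (b, v + 1) := by
  have ha : (ofCorners a b).Mem a := by rw [mem_ofCorners_iff]; omega
  rw [spin_smul_of_mem _ ha]
  congr 1
  ext
  · rw [rotFun_fst _ _ ha]; simp only [ofCorners]; omega
  · rw [rotFun_snd _ _ ha]; simp only [ofCorners]; omega

lemma sweep_le_of_mem_ofCorners {q a b w : Pos m n}
    (hab : (q.2 : ℕ) < a.2 ∧ (q.2 : ℕ) < b.2 ∨
      (q.2 : ℕ) ≤ a.2 ∧ (q.2 : ℕ) ≤ b.2 ∧ (a.1 : ℕ) ≤ q.1 ∧ (b.1 : ℕ) ≤ q.1)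
    (hw : (ofCorners a b).Mem w) : sweep q ≤ sweep w := by
  rw [sweep_le_sweep_iff]
  rw [mem_ofCorners_iff] at hw
  omega

/-- The route from `q` to `p`: through the rectangle with corners `q` and `p` when `p` lies no
lower than `q`, and otherwise along row `q.1` and then along column `p.2`. -/
lemma exists_list_spin_smul_eq_of_sweep_le {q p : Pos m n} (hqp : sweep q ≤ sweep p) :
    ∃ (l : List (Rect m n)) (u : ZMod 2), (∀ R ∈ l, ∀ w, R.Mem w → sweep q ≤ sweep w) ∧
      l.length + 1 ≤ solveCost q ∧ (l.map spin).prod • (q, (0 : ZMod 2)) = (p, u) := by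
  have hqp' := sweep_le_sweep_iff.1 hqp
  by_cases hpq : p = q
  · subst hpq
    refine ⟨[], 0, by simp, ?_, by rw [List.map_nil, List.prod_nil, one_smul]⟩
    simp only [solveCost, List.length_nil]
    split_ifs <;> omega
  by_cases hrow : (p.1 : ℕ) ≤ q.1
  · refine ⟨[ofCorners q p], 1, ?_, ?_, ?_⟩
    · simp only [List.mem_singleton, forall_eq]
      exact fun w => sweep_le_of_mem_ofCorners (by omega)
    · have hpq' : ¬ ((p.2 : ℕ) = q.2 ∧ (p.1 : ℕ) = q.1) := fun h =>
        hpq (Prod.ext (Fin.ext h.2) (Fin.ext h.1))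
      simp only [solveCost, List.length_singleton]
      split_ifs <;> omega
    · rw [List.map_singleton, List.prod_singleton, spin_ofCorners_smul, zero_add]
  · have hcol : (q.2 : ℕ) < p.2 := by omega
    set w : Pos m n := (q.1, p.2)
    refine ⟨[ofCorners w p, ofCorners q w], 0, ?_, ?_, ?_⟩
    · simp only [List.mem_cons, List.not_mem_nil, or_false, forall_eq_or_imp, forall_eq]
      exact ⟨fun _ => sweep_le_of_mem_ofCorners (.inl ⟨hcol, hcol⟩),
        fun _ => sweep_le_of_mem_ofCorners (.inr ⟨le_rfl, hcol.le, le_rfl, le_rfl⟩)⟩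
    · simp only [solveCost, List.length_cons, List.length_nil]
      split_ifs <;> omega
    · rw [List.map_cons, List.map_singleton, List.prod_cons, List.prod_singleton, mul_smul,
        spin_ofCorners_smul, spin_ofCorners_smul, zero_add, CharTwo.add_self_eq_zero]

lemma exists_list_spin_smul_eq {q p : Pos m n} (hqp : sweep q ≤ sweep p) (v : ZMod 2) :
    ∃ l : List (Rect m n), (∀ R ∈ l, ∀ w, R.Mem w → sweep q ≤ sweep w) ∧
      l.length ≤ solveCost q ∧ (l.map spin).prod • (q, (0 : ZMod 2)) = (p, v) := by
  obtain ⟨l, u, hl, hlen, hsmul⟩ := exists_list_spin_smul_eq_of_sweep_le hqp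
  by_cases huv : u = v
  · exact ⟨l, hl, by omega, huv ▸ hsmul⟩
  refine ⟨ofCorners p p :: l, ?_, by simpa using hlen, ?_⟩
  · simp only [List.mem_cons, forall_eq_or_imp]
    refine ⟨fun w => sweep_le_of_mem_ofCorners ?_, hl⟩
    rw [sweep_le_sweep_iff] at hqp
    omega
  · have hflip : ∀ a b : ZMod 2, a ≠ b → a + 1 = b := by decide
    rw [List.map_cons, List.prod_cons, mul_smul, hsmul, spin_ofCorners_smul, hflip u v huv]

end Rect

namespace SpinElt

variable {m n : ℕ}

open Pos

def sweepTile (t : Fin n ×ₗ (Fin m)ᵒᵈ) : Pos m n × ZMod 2 := (sweep.symm t, 0)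

lemma exists_list_isSpin_smul_eq (t : Fin n ×ₗ (Fin m)ᵒᵈ) (x : SpinElt m n)
    (hx : x ∈ fixingSubgroup (SpinElt m n) (sweepTile '' Set.Iio t)) :
    ∃ l : List (SpinElt m n),
      (∀ g ∈ l, IsSpin g ∧ g ∈ fixingSubgroup (SpinElt m n) (sweepTile '' Set.Iio t)) ∧
        l.length ≤ solveCost (sweep.symm t) ∧ l.prod • sweepTile t = x • sweepTile t := by
  set q := sweep.symm t
  have hfix := (mem_fixingSubgroup_iff _).1 hx
  rcases hxq : x • sweepTile t with ⟨p, v⟩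
  have hqp : sweep q ≤ sweep p := by
    refine le_of_not_gt fun hpt => hpt.ne (congrArg sweep (x.perm.injective ?_))
    have hp := congrArg Prod.fst
      (hfix (p, 0) ⟨sweep p, by simpa [q] using hpt, by simp [sweepTile]⟩)
    have hq := congrArg Prod.fst hxq
    simp only [smul_def, sweepTile] at hp hq
    rw [hp, hq]
  obtain ⟨l, hl, hlen, hsmul⟩ := Rect.exists_list_spin_smul_eq hqp v
  refine ⟨l.map Rect.spin, ?_, by simpa using hlen, hsmul⟩
  simp only [List.mem_map, forall_exists_index, and_imp]
  rintro _ R hR rfl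
  refine ⟨⟨R, rfl⟩, R.spin_mem_fixingSubgroup ?_⟩
  rintro _ ⟨s, hs, rfl⟩ hRs
  exact (hl R hR _ hRs).not_gt (by simpa [sweepTile, q] using hs)

end SpinElt

open Pos SpinElt in
/-- Every element of `Spin_{m×n}` is a product of at most `3mn - (m+n)` spins. -/
theorem stmt11 (m n : ℕ) (x : SpinElt m n) :
    ∃ l : List (SpinElt m n),
      (∀ s ∈ l, IsSpin s) ∧ l.length ≤ 3 * m * n - (m + n) ∧ l.prod = x := by
  obtain ⟨l, hspin, hlen, hprod⟩ := exists_list_prod_eq_of_forall_exists_smul_eq IsSpin sweepTile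
    (fun t => solveCost (sweep.symm t))
    (fun g hg => g.eq_one_of_forall_smul_eq fun p => by simpa [sweepTile] using hg (sweep p))
    exists_list_isSpin_smul_eq x
  rw [Equiv.sum_comp sweep.symm solveCost, sum_solveCost] at hlen
  exact ⟨l, hspin, hlen, hprod⟩
end

section
/- For N = mn > 1, the minimal number k of spins needed in the worst case satisfies k ≥ (1/2)N − ((1−ln 2)/2)·(N/ln N) + 1/4, given that (C(m+1,2)C(n+1,2)+1)^k ≥ 2^N·N! and C(m+1,2)C(n+1,2)+1 < N². -/
/-!
Taking logarithms, `c ≤ N²` turns `2^N · N! ≤ c^k` into `N ln 2 + ln N! ≤ 2k ln N`, and Stirling's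
lower bound `ln N! ≥ N ln N - N + (ln N)/2` then leaves a linear inequality for `k`, solved by
dividing by `2 ln N > 0`.
-/

open Real
open scoped Nat

lemma le_log_factorial {N : ℕ} (hN : N ≠ 0) : N * log N - N + log N / 2 ≤ log N ! := by
  have h2π : 0 ≤ log (2 * π) := log_nonneg (by linarith [pi_gt_three])
  linarith [Stirling.le_log_factorial_stirling hN]

lemma log_le_two_mul_mul_log_of_le_pow {x c N : ℝ} {k : ℕ} (hx : 0 < x) (hc : 0 < c)
    (hcN : c ≤ N ^ 2) (hxc : x ≤ c ^ k) : log x ≤ 2 * k * log N :=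
  calc log x ≤ log (c ^ k) := log_le_log hx hxc
    _ = k * log c := log_pow c k
    _ ≤ k * log (N ^ 2) := by gcongr
    _ = 2 * k * log N := by rw [log_pow]; push_cast; ring

theorem le_of_pow_mul_factorial_le_pow {a c : ℝ} {N k : ℕ} (ha : 0 < a) (hN : 1 < N)
    (hc : 0 < c) (hcN : c ≤ N ^ 2) (h : a ^ N * N ! ≤ c ^ k) :
    (1 / 2 : ℝ) * N - ((1 - log a) / 2) * (N / log N) + 1 / 4 ≤ k := by
  have hlogN : 0 < log N := log_pos (by exact_mod_cast hN)
  have hupper := log_le_two_mul_mul_log_of_le_pow (by positivity) hc hcN h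
  rw [log_mul (by positivity) (by positivity), log_pow] at hupper
  have hlower := le_log_factorial (N := N) (by omega)
  rw [← mul_le_mul_iff_of_pos_right (by positivity : (0 : ℝ) < 2 * log N)]
  have hexpand : ((1 / 2 : ℝ) * N - ((1 - log a) / 2) * (N / log N) + 1 / 4) * (2 * log N)
      = N * log a + (N * log N - N + log N / 2) := by
    field_simp
    ring
  rw [hexpand]
  linarith

theorem stmt13_general (m n N k : ℕ) (hN1 : 1 < N)
    (hck : (2 : ℝ) ^ N * N.factorial ≤
      ((Nat.choose (m + 1) 2 * Nat.choose (n + 1) 2 + 1 : ℕ) : ℝ) ^ k)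
    (hcN : Nat.choose (m + 1) 2 * Nat.choose (n + 1) 2 + 1 < N ^ 2) :
    (1 / 2 : ℝ) * N - ((1 - Real.log 2) / 2) * (N / Real.log N) + 1 / 4 ≤ (k : ℝ) :=
  le_of_pow_mul_factorial_le_pow two_pos hN1 (by positivity) (by exact_mod_cast hcN.le) hck

/-- For `N = mn > 1`, if `c^k ≥ 2^N · N!` where `c = C(m+1,2)C(n+1,2) + 1 < N²`, then
`k ≥ N/2 - ((1 - ln 2)/2)·(N / ln N) + 1/4`. -/
theorem stmt13 (m n N k : ℕ) (hN : N = m * n) (hN1 : 1 < N)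
    (hck : (2 : ℝ) ^ N * N.factorial ≤
      ((Nat.choose (m + 1) 2 * Nat.choose (n + 1) 2 + 1 : ℕ) : ℝ) ^ k)
    (hcN : Nat.choose (m + 1) 2 * Nat.choose (n + 1) 2 + 1 < N ^ 2) :
    (1 / 2 : ℝ) * N - ((1 - Real.log 2) / 2) * (N / Real.log N) + 1 / 4 ≤ (k : ℝ) :=
  stmt13_general m n N k hN1 hck hcN
end

section
/- The subgroup of Spin_{m×n} generated by the 1×2 and 2×1 spins maps isomorphically onto S_N under the projection π : Spin_{m×n} → S_N; in particular this subgroup has trivial intersection with the kernel of π and has index 2^N in Spin_{m×n}. -/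
/-- The projection `π : Spin_{m×n} → S_N`, `(α, u) ↦ α`, as a group homomorphism. -/
def spinProj (m n : ℕ) : SpinElt m n →* Equiv.Perm (Pos m n) where
  toFun x := x.perm
  map_one' := rfl
  map_mul' _ _ := rfl

/-!
Colour the board like a checkerboard, `c p = p.1 + p.2 mod 2`. Conjugating the obvious copy
`σ ↦ (σ, 0)` of `S_N` by `(1, c)` gives a section `φ σ = (σ, c + c ∘ σ⁻¹)` of `π`. A domino spin
swaps two cells of opposite colour and flips exactly those two, so it is `φ` of its
transposition. Since the grid graph is connected, the adjacent transpositions generate `S_N`,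
so the domino spins generate exactly `φ(S_N)`. The image of a section is a complement of
`ker π ≅ (ℤ/2ℤ)^N`, which gives the index.
-/

open Equiv

theorem SimpleGraph.Preconnected.closure_swap_adj_eq_top {α : Type*} [Finite α] [DecidableEq α]
    {G : SimpleGraph α} (hG : G.Preconnected) :
    Subgroup.closure {σ : Perm α | ∃ x y, G.Adj x y ∧ σ = swap x y} = ⊤ := by
  set S := {σ : Perm α | ∃ x y, G.Adj x y ∧ σ = swap x y}
  have hS : ∀ σ ∈ S, σ.IsSwap := by
    rintro _ ⟨x, y, hxy, rfl⟩
    exact ⟨x, y, hxy.ne, rfl⟩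
  have : MulAction.IsPretransitive (Subgroup.closure S) α := by
    refine ⟨fun x y => ?_⟩
    induction (SimpleGraph.reachable_iff_reflTransGen x y).1 (hG x y) with
    | refl => exact ⟨1, one_smul _ _⟩
    | tail _ hbc ih =>
      obtain ⟨g, rfl⟩ := ih
      exact ⟨⟨swap _ _, Subgroup.subset_closure ⟨_, _, hbc, rfl⟩⟩ * g, by
        rw [mul_smul]; exact swap_apply_left _ _⟩
  exact closure_of_isSwap_of_isPretransitive hS

namespace MonoidHom

variable {G Q : Type*} [Group G] [Group Q] {π : G →* Q} {φ : Q →* G}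

theorem injective_restrict_range_of_leftInverse (h : Function.LeftInverse π φ) :
    Function.Injective fun x : φ.range => π x := by
  rintro ⟨_, a, rfl⟩ ⟨_, b, rfl⟩ hab
  simp only [h a, h b] at hab
  rw [hab]

theorem isComplement'_ker_range_of_leftInverse (h : Function.LeftInverse π φ) :
    π.ker.IsComplement' φ.range := by
  refine Subgroup.isComplement'_of_disjoint_and_mul_eq_univ ?_ ?_
  · rw [Subgroup.disjoint_def]
    rintro _ hker ⟨q, rfl⟩
    rw [mem_ker, h q] at hker
    rw [hker, map_one]
  · refine Set.eq_univ_of_forall fun g =>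
      ⟨g * (φ (π g))⁻¹, ?_, φ (π g), ⟨π g, rfl⟩, inv_mul_cancel_right g _⟩
    rw [SetLike.mem_coe, mem_ker, map_mul, map_inv, h (π g), mul_inv_cancel]

end MonoidHom

section Spin

variable {m n : ℕ}

def checkerColor (p : Pos m n) : ZMod 2 := ((p.1 + p.2 : ℕ) : ZMod 2)

def SpinElt.ofPerm_s15 (m n : ℕ) : Perm (Pos m n) →* SpinElt m n where
  toFun σ := ⟨σ, 0⟩
  map_one' := rfl
  map_mul' σ τ := by ext <;> simp

def checkerboardSection (m n : ℕ) : Perm (Pos m n) →* SpinElt m n :=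
  (MulAut.conj (⟨1, checkerColor⟩ : SpinElt m n)).toMonoidHom.comp (SpinElt.ofPerm_s15 m n)

lemma checkerboardSection_perm (σ : Perm (Pos m n)) : (checkerboardSection m n σ).perm = σ := by
  simp [checkerboardSection, SpinElt.ofPerm_s15]

lemma checkerboardSection_flip (σ : Perm (Pos m n)) (p : Pos m n) :
    (checkerboardSection m n σ).flip p = checkerColor p + checkerColor (σ⁻¹ p) := by
  simp [checkerboardSection, SpinElt.ofPerm_s15]

lemma leftInverse_spinProj_checkerboardSection :
    Function.LeftInverse (spinProj m n) (checkerboardSection m n) :=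
  checkerboardSection_perm

lemma card_ker_spinProj : Nat.card (spinProj m n).ker = 2 ^ (m * n) := by
  have e : (spinProj m n).ker ≃ (Pos m n → ZMod 2) :=
    { toFun x := x.1.flip
      invFun u := ⟨⟨1, u⟩, rfl⟩
      left_inv x := Subtype.ext (SpinElt.ext x.2.symm rfl)
      right_inv _ := rfl }
  rw [Nat.card_congr e, Nat.card_fun, Nat.card_zmod, Nat.card_prod, Nat.card_fin, Nat.card_fin]

def Rect.IsDomino (R : Rect m n) : Prop := R.dims = (1, 2) ∨ R.dims = (2, 1)

lemma Rect.IsDomino.spin_eq {R : Rect m n} (hR : R.IsDomino) :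
    R.spin = checkerboardSection m n R.spinPerm := by
  refine SpinElt.ext (checkerboardSection_perm _).symm (funext fun p => ?_)
  rw [checkerboardSection_flip]
  change (if R.Mem p then 1 else 0) = checkerColor p + checkerColor (R.rotFun p)
  by_cases hp : R.Mem p
  · have hsum : (p.1 : ℕ) + p.2 + ((R.rotFun p).1 + (R.rotFun p).2) = 2 * (R.r1 + R.c1) + 1 := by
      rw [R.rotFun_fst p hp, R.rotFun_snd p hp]
      obtain ⟨h1, h2, h3, h4⟩ := hp
      rcases hR with h | h <;> simp only [Rect.dims, Prod.mk.injEq] at h <;> omega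
    rw [if_pos hp, checkerColor, checkerColor, ← Nat.cast_add, hsum]
    exact (ZMod.natCast_eq_one_iff_odd.2 ⟨_, rfl⟩).symm
  · rw [if_neg hp, R.rotFun_of_not_mem p hp, CharTwo.add_self_eq_zero]

def Rect.ofLE {p q : Pos m n} (h : p ≤ q) : Rect m n :=
  ⟨p.1, p.2, q.1, q.2, h.1, h.2, q.1.isLt, q.2.isLt⟩

lemma exists_isDomino_spinPerm_eq_swap_of_le {p q : Pos m n} (h : p ≤ q)
    (hpq : (p.1 : ℕ) + p.2 + 1 = q.1 + q.2) :
    ∃ R : Rect m n, R.IsDomino ∧ R.spinPerm = swap p q := by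
  have h1 : (p.1 : ℕ) ≤ q.1 := h.1
  have h2 : (p.2 : ℕ) ≤ q.2 := h.2
  refine ⟨Rect.ofLE h, ?_, Equiv.ext fun z => ?_⟩
  · simp only [Rect.IsDomino, Rect.dims, Rect.ofLE, Prod.mk.injEq]
    omega
  change (Rect.ofLE h).rotFun z = swap p q z
  by_cases hz : (Rect.ofLE h).Mem z
  · have hzpq : p = z ∨ q = z := by
      obtain ⟨a1, a2, a3, a4⟩ := hz
      simp only [Rect.ofLE] at a1 a2 a3 a4
      simp only [Prod.ext_iff, Fin.ext_iff]
      omega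
    refine Prod.ext (Fin.ext ?_) (Fin.ext ?_) <;>
      simp only [Rect.rotFun_fst _ _ hz, Rect.rotFun_snd _ _ hz] <;>
      rcases hzpq with rfl | rfl <;>
      simp only [swap_apply_left, swap_apply_right, Rect.ofLE] <;> omega
  · rw [Rect.rotFun_of_not_mem _ _ hz, swap_apply_of_ne_of_ne] <;> rintro rfl
    · exact hz ⟨le_rfl, h1, le_rfl, h2⟩
    · exact hz ⟨h1, le_rfl, h2, le_rfl⟩

lemma exists_isDomino_spinPerm_eq_swap {p q : Pos m n}
    (hpq : (SimpleGraph.pathGraph m □ SimpleGraph.pathGraph n).Adj p q) :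
    ∃ R : Rect m n, R.IsDomino ∧ R.spinPerm = swap p q := by
  rw [SimpleGraph.boxProd_adj, SimpleGraph.pathGraph_adj, SimpleGraph.pathGraph_adj] at hpq
  have : (p ≤ q ∧ (p.1 : ℕ) + p.2 + 1 = q.1 + q.2) ∨
      (q ≤ p ∧ (q.1 : ℕ) + q.2 + 1 = p.1 + p.2) := by
    simp only [Prod.le_def, Fin.le_def, Fin.ext_iff] at hpq ⊢
    omega
  rcases this with ⟨h, hs⟩ | ⟨h, hs⟩
  · exact exists_isDomino_spinPerm_eq_swap_of_le h hs
  · rw [swap_comm]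
    exact exists_isDomino_spinPerm_eq_swap_of_le h hs

lemma closure_isDomino_spin_eq_range :
    Subgroup.closure {s : SpinElt m n | ∃ R : Rect m n, s = R.spin ∧ R.IsDomino} =
      (checkerboardSection m n).range := by
  refine le_antisymm ((Subgroup.closure_le _).2 ?_) ?_
  · rintro _ ⟨R, rfl, hR⟩
    exact ⟨R.spinPerm, hR.spin_eq.symm⟩
  rw [MonoidHom.range_eq_map, ← (SimpleGraph.pathGraph_preconnected m).boxProd
    (SimpleGraph.pathGraph_preconnected n) |>.closure_swap_adj_eq_top, MonoidHom.map_closure,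
    Subgroup.closure_le]
  rintro _ ⟨_, ⟨p, q, hpq, rfl⟩, rfl⟩
  obtain ⟨R, hR, hperm⟩ := exists_isDomino_spinPerm_eq_swap hpq
  exact Subgroup.subset_closure ⟨R, by rw [hR.spin_eq, hperm], hR⟩

end Spin

/-- The subgroup generated by the `1×2` and `2×1` spins maps isomorphically onto `S_N`
under the projection `π`; in particular it meets the kernel of `π` trivially and has
index `2^N` in `Spin_{m×n}`. -/
theorem stmt15 (m n : ℕ) (H : Subgroup (SpinElt m n))
    (hH : H = Subgroup.closure {s : SpinElt m n | ∃ R : Rect m n, s = R.spin ∧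
      (R.dims = (1, 2) ∨ R.dims = (2, 1))}) :
    Function.Injective (fun x : H => spinProj m n x) ∧
    (∀ σ : Equiv.Perm (Pos m n), ∃ x ∈ H, spinProj m n x = σ) ∧
    H ⊓ (spinProj m n).ker = ⊥ ∧
    H.index = 2 ^ (m * n) := by
  obtain rfl : H = (checkerboardSection m n).range := hH.trans closure_isDomino_spin_eq_range
  have hsection := leftInverse_spinProj_checkerboardSection (m := m) (n := n)
  have hcompl := MonoidHom.isComplement'_ker_range_of_leftInverse hsection
  exact ⟨MonoidHom.injective_restrict_range_of_leftInverse hsection,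
    fun σ => ⟨_, ⟨σ, rfl⟩, hsection σ⟩, disjoint_iff.1 hcompl.disjoint.symm,
    hcompl.index_eq_card.trans card_ker_spinProj⟩
end
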